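/- arXiv:2308.04425 — 8 statements merged into one kernel-verified Lean document; each statement's English description precedes it below -/
import Mathlib

section
/- In the category of nonempty sets (the full subcategory of the category of types on types satisfying Nonempty, with functions as morphisms), the one-point set PUnit is not a uniformly movable object. -/
/-!
Condition (2), applied with `Z = Y`, `q = p`, says that `u(p) : M → Y` is fixed by every
endomorphism of `Y` over `X`. Over the one-point set every self-map of `Bool` lies over `X`, in
particular both constant maps; a map from the nonempty set `M` fixed by both would take both
values `true` and `false` at a point of `M`.
-/

open CategoryTheory

/-- An object `X` of a category is *movable* if there exist an object `M` and a morphism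
`m : M ⟶ X` such that every morphism `p : Y ⟶ X` admits `u : M ⟶ Y` with `u ≫ p = m`. -/
def Movable {K : Type*} [Category K] (X : K) : Prop :=
  ∃ (M : K) (m : M ⟶ X), ∀ (Y : K) (p : Y ⟶ X), ∃ u : M ⟶ Y, u ≫ p = m

/-- An object `X` of a category is *uniformly movable* if there exist an object `M`, a morphism
`m : M ⟶ X`, and an assignment `u` sending each `p : Y ⟶ X` to `u Y p : M ⟶ Y` with
(1) `u Y p ≫ p = m` and (2) `u Y p = u Z q ≫ r` whenever `r ≫ p = q`. -/
def UniformlyMovable {K : Type*} [Category K] (X : K) : Prop :=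
  ∃ (M : K) (m : M ⟶ X) (u : ∀ Y : K, (Y ⟶ X) → (M ⟶ Y)),
    (∀ (Y : K) (p : Y ⟶ X), u Y p ≫ p = m) ∧
    (∀ (Y Z : K) (p : Y ⟶ X) (q : Z ⟶ X) (r : Z ⟶ Y), r ≫ p = q → u Y p = u Z q ≫ r)

universe u

theorem UniformlyMovable.exists_hom_comp_eq_self {K : Type*} [Category K] {X : K}
    (hX : UniformlyMovable X) :
    ∃ M : K, ∀ (Y : K) (p : Y ⟶ X), ∃ g : M ⟶ Y, ∀ r : Y ⟶ Y, r ≫ p = p → g ≫ r = g := by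
  obtain ⟨M, -, u, -, hu⟩ := hX
  exact ⟨M, fun Y p => ⟨u Y p, fun r hr => (hu Y Y p p r hr).symm⟩⟩

theorem subsingleton_of_comp_const_eq_self {M Y : ObjectProperty.FullSubcategory
      fun α : Type u => Nonempty α} (g : M ⟶ Y)
    (hg : ∀ y : Y.obj, g ≫ ObjectProperty.homMk (TypeCat.ofHom fun _ => y) = g) :
    Subsingleton Y.obj := by
  obtain ⟨x⟩ := M.property
  have hgx (y : Y.obj) : y = g.hom x :=
    congrArg (fun f : M ⟶ Y => f.hom x) (hg y)
  exact ⟨fun y y' => (hgx y).trans (hgx y').symm⟩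

/-- In the category of nonempty sets, the one-point set `PUnit` is not uniformly movable. -/
theorem punit_not_uniformlyMovable :
    ¬ UniformlyMovable (⟨PUnit, ⟨PUnit.unit⟩⟩ : ObjectProperty.FullSubcategory fun α : Type => Nonempty α) := by
  intro hX
  obtain ⟨M, hM⟩ := hX.exists_hom_comp_eq_self
  let B : ObjectProperty.FullSubcategory fun α : Type => Nonempty α := ⟨Bool, ⟨true⟩⟩
  obtain ⟨g, hg⟩ := hM B (ObjectProperty.homMk (TypeCat.ofHom fun _ => PUnit.unit))
  have : Subsingleton Bool :=
    subsingleton_of_comp_const_eq_self g fun _ => hg _ rfl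
  exact Bool.true_eq_false_eq_False (Subsingleton.elim true false)
end

section
/- Let 𝒦 be a category, let X be a uniformly movable object of 𝒦, and let Y be an object dominated by X, i.e., there exist morphisms f : X → Y and g : Y → X with f ∘ g = id_Y. Then Y is uniformly movable. -/
open CategoryTheory

/-- An object dominated by a uniformly movable object is uniformly movable. -/
theorem uniformlyMovable_of_dominated {K : Type*} [Category K] (X Y : K)
    (hX : UniformlyMovable X) (f : X ⟶ Y) (g : Y ⟶ X) (hfg : g ≫ f = 𝟙 Y) :
    UniformlyMovable Y := by
  obtain ⟨M, m, u, h1, h2⟩ := hX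
  refine ⟨M, m ≫ f, fun Z p => u Z (p ≫ g), ?_, ?_⟩
  · intro Z p
    calc u Z (p ≫ g) ≫ p = u Z (p ≫ g) ≫ p ≫ (g ≫ f) := by rw [hfg, Category.comp_id]
    _ = (u Z (p ≫ g) ≫ (p ≫ g)) ≫ f := by simp [Category.assoc]
    _ = m ≫ f := by rw [h1]
  · intro Z W p q r hr
    exact h2 Z W (p ≫ g) (q ≫ g) r (by rw [← Category.assoc, hr])
end

section
/- Let 𝒦 and ℒ be categories such that ℒ is weakly functorially dominated by 𝒦, i.e., there exist functors J : ℒ ⥤ 𝒦 and D : 𝒦 ⥤ ℒ and a natural transformation ψ : J ⋙ D ⟶ 𝟭_ℒ (from the composite D ∘ J to the identity functor of ℒ). If 𝒦 is a uniformly movable category, then ℒ is a uniformly movable category. -/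
open CategoryTheory

/-- If `ℒ` is weakly functorially dominated by a uniformly movable category `𝒦`
(there are functors `J : ℒ ⥤ 𝒦`, `D : 𝒦 ⥤ ℒ` and a natural transformation
`ψ : J ⋙ D ⟶ 𝟭 L`), then `ℒ` is uniformly movable. -/
theorem uniformlyMovable_of_weakly_functorially_dominated
    {K : Type*} [Category K] {L : Type*} [Category L]
    (J : L ⥤ K) (D : K ⥤ L) (ψ : J ⋙ D ⟶ 𝟭 L)
    (hK : ∀ X : K, UniformlyMovable X) :
    ∀ X : L, UniformlyMovable X := by
  intro X
  obtain ⟨M, m, u, h1, h2⟩ := hK (J.obj X)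
  refine ⟨D.obj M, D.map m ≫ ψ.app X,
    fun Y p => D.map (u (J.obj Y) (J.map p)) ≫ ψ.app Y, ?_, ?_⟩
  · intro Y p
    have hnat := ψ.naturality p
    simp only [Functor.comp_map, Functor.id_map] at hnat
    simp only []
    rw [Category.assoc, ← hnat, ← Category.assoc, ← D.map_comp, h1]
  · intro Y Z p q r hrpq
    have h := h2 (J.obj Y) (J.obj Z) (J.map p) (J.map q) (J.map r)
      (by rw [← J.map_comp, hrpq])
    have hnat := ψ.naturality r
    simp only [Functor.comp_map, Functor.id_map] at hnat
    simp only []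
    rw [h, D.map_comp, Category.assoc, hnat, ← Category.assoc]
end

section
/- Let 𝒦 and ℒ be categories such that ℒ is functorially dominated by 𝒦, i.e., there exist functors J : ℒ ⥤ 𝒦 and D : 𝒦 ⥤ ℒ with J ⋙ D = 𝟭_ℒ (the composite D ∘ J equals the identity functor of ℒ). If 𝒦 is a uniformly movable category, then ℒ is a uniformly movable category. -/
open CategoryTheory

/-- If `ℒ` is functorially dominated by a uniformly movable category `𝒦`
(there are functors `J : ℒ ⥤ 𝒦`, `D : 𝒦 ⥤ ℒ` with `J ⋙ D = 𝟭 ℒ`),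
then `ℒ` is uniformly movable. -/
theorem uniformlyMovable_of_functorially_dominated
    {K : Type*} [Category K] {L : Type*} [Category L]
    (J : L ⥤ K) (D : K ⥤ L) (hJD : J ⋙ D = 𝟭 L)
    (hK : ∀ X : K, UniformlyMovable X) :
    ∀ X : L, UniformlyMovable X := by
  intro X
  obtain ⟨M, m, u, h1, h2⟩ := hK (J.obj X)
  have e : ∀ Y : L, D.obj (J.obj Y) = Y := fun Y => Functor.congr_obj hJD Y
  have hmap : ∀ {Y Z : L} (f : Y ⟶ Z),
      D.map (J.map f) = eqToHom (e Y) ≫ f ≫ eqToHom (e Z).symm := by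
    intro Y Z f
    have := Functor.congr_hom hJD f
    simpa using this
  refine ⟨D.obj M, D.map m ≫ eqToHom (e X),
    fun Y p => D.map (u (J.obj Y) (J.map p)) ≫ eqToHom (e Y), ?_, ?_⟩
  · intro Y p
    have := h1 (J.obj Y) (J.map p)
    calc (D.map (u (J.obj Y) (J.map p)) ≫ eqToHom (e Y)) ≫ p
        = D.map (u (J.obj Y) (J.map p)) ≫ D.map (J.map p) ≫ eqToHom (e X) := by
          rw [hmap p]; simp
      _ = D.map (u (J.obj Y) (J.map p) ≫ J.map p) ≫ eqToHom (e X) := by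
          rw [D.map_comp]; simp
      _ = D.map m ≫ eqToHom (e X) := by rw [this]
  · intro Y Z p q r hr
    have hq : J.map r ≫ J.map p = J.map q := by rw [← J.map_comp, hr]
    have := h2 (J.obj Y) (J.obj Z) (J.map p) (J.map q) (J.map r) hq
    dsimp only
    rw [this, D.map_comp, hmap r]
    simp
end

section
/- Let (𝒦_i)_{i ∈ I} be a family of categories, each having at least one object. The product category ∏_{i ∈ I} 𝒦_i (objects are I-indexed families of objects, morphisms are I-indexed families of morphisms, composed componentwise) is uniformly movable if and only if every category 𝒦_i, i ∈ I, is uniformly movable. -/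
open CategoryTheory

open scoped Classical in
/-- The family equal to an arbitrary object everywhere except `i`, where it is `A`. -/
noncomputable def piUpd {I : Type*} {K : I → Type*} [∀ i, Category (K i)]
    [∀ i, Nonempty (K i)] (i : I) (A : K i) : ∀ j, K j :=
  fun j => if h : j = i then cast (congrArg K h).symm A else Classical.arbitrary (K j)

lemma piUpd_self {I : Type*} {K : I → Type*} [∀ i, Category (K i)]
    [∀ i, Nonempty (K i)] (i : I) (A : K i) : piUpd i A i = A := by
  simp [piUpd]

open scoped Classical in
/-- Lift of a morphism between the update families: identity-like off `i`. -/
noncomputable def piUpdHom {I : Type*} {K : I → Type*} [∀ i, Category (K i)]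
    [∀ i, Nonempty (K i)] (i : I) {A B : K i} (f : A ⟶ B) :
    piUpd i A ⟶ piUpd i B :=
  fun j =>
    if h : j = i then by
      subst h
      exact eqToHom (piUpd_self j A) ≫ f ≫ eqToHom (piUpd_self j B).symm
    else eqToHom (by simp [piUpd, h])

lemma piUpdHom_self {I : Type*} {K : I → Type*} [∀ i, Category (K i)]
    [∀ i, Nonempty (K i)] (i : I) {A B : K i} (f : A ⟶ B) :
    piUpdHom i f i = eqToHom (piUpd_self i A) ≫ f ≫ eqToHom (piUpd_self i B).symm := by
  simp [piUpdHom]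

lemma piUpdHom_comp {I : Type*} {K : I → Type*} [∀ i, Category (K i)]
    [∀ i, Nonempty (K i)] (i : I) {A B C : K i} (f : A ⟶ B) (g : B ⟶ C) :
    piUpdHom i f ≫ piUpdHom i g = piUpdHom i (f ≫ g) := by
  funext j
  by_cases h : j = i
  · subst h
    simp [Pi.comp_apply, piUpdHom_self]
  · simp [Pi.comp_apply, piUpdHom, h]

/-- A product of (nonempty) categories is uniformly movable if and only if every factor
category is uniformly movable. -/
theorem pi_uniformlyMovable_iff {I : Type*} {K : I → Type*}
    [∀ i, Category (K i)] [∀ i, Nonempty (K i)] :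
    (∀ X : (∀ i, K i), UniformlyMovable X) ↔ ∀ (i : I) (Xi : K i), UniformlyMovable Xi := by
  constructor
  · intro H i Xi
    obtain ⟨M, m, u, h1, h2⟩ := H (piUpd i Xi)
    refine ⟨M i, m i ≫ eqToHom (piUpd_self i Xi),
      fun Yi p => u (piUpd i Yi) (piUpdHom i p) i ≫ eqToHom (piUpd_self i Yi), ?_, ?_⟩
    · intro Yi p
      have h := congrFun (h1 (piUpd i Yi) (piUpdHom i p)) i
      simp only [Pi.comp_apply, piUpdHom_self] at h
      simp only [Category.assoc] at h ⊢
      rw [← h]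
      simp
    · intro Yi Zi p q r hr
      have key := h2 (piUpd i Yi) (piUpd i Zi) (piUpdHom i p) (piUpdHom i q)
        (piUpdHom i r) (by rw [piUpdHom_comp, hr])
      have h := congrFun key i
      simp only [Pi.comp_apply, piUpdHom_self] at h
      simp only []
      rw [h]
      simp
  · intro h X
    choose M m u h1 h2 using fun i => h i (X i)
    refine ⟨M, m, fun Y p j => u j (Y j) (p j), ?_, ?_⟩
    · intro Y p
      funext j
      exact h1 j (Y j) (p j)
    · intro Y Z p q r hr
      funext j
      exact h2 j (Y j) (Z j) (p j) (q j) (r j) (congrFun hr j)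
end

section
/- Let 𝒦 be a category admitting a uniform movability pair in the sense of Pop: a functor F : 𝒦 ⥤ 𝒦, a natural transformation φ : F ⟶ 𝟭_𝒦, and an assignment G sending each morphism f : Y → X of 𝒦 to a morphism G(f) : F(X) → Y with f ∘ G(f) = φ_X, such that for every commutative square v ∘ f = f' ∘ u (with f : Y → X, f' : Y' → X', u : Y → Y', v : X → X') one has G(f') ∘ F(v) = u ∘ G(f). Then 𝒦 is a uniformly movable category. -/
open CategoryTheory

/-- A category admitting a uniform movability pair in the sense of Pop
(a functor `F : 𝒦 ⥤ 𝒦`, a natural transformation `φ : F ⟶ 𝟭 𝒦`, and a natural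
assignment `G` of uniform movability factors) is a uniformly movable category. -/
theorem uniformlyMovable_of_pop_pair {K : Type*} [Category K]
    (F : K ⥤ K) (φ : F ⟶ 𝟭 K)
    (G : ∀ (Y X : K), (Y ⟶ X) → (F.obj X ⟶ Y))
    (hG : ∀ (Y X : K) (f : Y ⟶ X), G Y X f ≫ f = φ.app X)
    (hnat : ∀ (Y X Y' X' : K) (f : Y ⟶ X) (f' : Y' ⟶ X') (u : Y ⟶ Y') (v : X ⟶ X'),
      f ≫ v = u ≫ f' → F.map v ≫ G Y' X' f' = G Y X f ≫ u) :
    ∀ X : K, UniformlyMovable X := by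
  intro X
  refine ⟨F.obj X, φ.app X, fun Y p => G Y X p, fun Y p => hG Y X p, ?_⟩
  intro Y Z p q r hr
  have := hnat Z X Y X q p r (𝟙 X) (by simp [hr])
  simpa using this
end

section
/- Let 𝒯 be a category, 𝒫 a full subcategory of 𝒯, X an object of 𝒯, and suppose given 𝒫-expansion data for X: a directed preordered set Λ, an inverse system (X_λ, p_{λλ'}, Λ) with all X_λ in 𝒫, and morphisms p_λ : X → X_λ with p_{λλ'} ∘ p_{λ'} = p_λ for λ ≤ λ', satisfying conditions (AE1) and (AE2). If the comma category X_𝒫 of X over 𝒫 is a uniformly movable category, then the inverse system (X_λ, p_{λλ'}, Λ) is uniformly movable. -/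
open CategoryTheory

/-!
Let `Y = (p_λ : X → X_λ)` in `X_𝒫`, and let `m : (a : X → Q) → Y`, `u` witness its uniform
movability. For `κ ≥ λ` the bonding map is a morphism `p_κ → p_λ` of `X_𝒫`, so `u` gives maps
`Q → X_κ` which, by the uniformity condition, commute with the bonding maps; by directedness they
extend to a cone `V` from `Q` over the whole system, with `a ≫ V_λ = p_λ`. By (AE1) `a` factors
through some `p_μ`, and (AE2) then yields `m(λ) ≥ μ, λ` and `g : X_{m(λ)} → Q` with
`g ≫ V_λ = p_{λ m(λ)}`; the required family is `r^ν = g ≫ V_ν`.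
-/

def commaObj {T : Type*} [Category T] (P : T → Prop) (X : T) {Q : T} (hQ : P Q)
    (f : X ⟶ Q) : StructuredArrow X (ObjectProperty.ι P) :=
  StructuredArrow.mk (show X ⟶ (ObjectProperty.ι P).obj ⟨Q, hQ⟩ from f)

def commaHom {T : Type*} [Category T] {P : T → Prop} {X : T} {Q Q' : T} {hQ : P Q}
    {hQ' : P Q'} {f : X ⟶ Q} {f' : X ⟶ Q'} (g : Q ⟶ Q') (w : f ≫ g = f') :
    commaObj P X hQ f ⟶ commaObj P X hQ' f' :=
  StructuredArrow.homMk (ObjectProperty.homMk g) w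

namespace InverseSystem

variable {T : Type*} [Category T] {Λ : Type*} [Preorder Λ] {XX : Λ → T}
  (bond : ∀ {l l' : Λ}, l ≤ l' → (XX l' ⟶ XX l))

/-- A cone from `A` over the inverse system `(XX, bond)`. -/
def IsCompatible {A : T} (r : ∀ ν : Λ, A ⟶ XX ν) : Prop :=
  ∀ (ν ν' : Λ) (h : ν ≤ ν'), r ν' ≫ bond h = r ν

theorem exists_isCompatible_of_compatible_above [IsDirected Λ (· ≤ ·)]
    (bond_comp : ∀ {l l' l'' : Λ} (h : l ≤ l') (h' : l' ≤ l''),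
      bond h' ≫ bond h = bond (h.trans h'))
    {A : T} (l : Λ) (U : ∀ κ : Λ, l ≤ κ → (A ⟶ XX κ))
    (hU : ∀ (κ κ' : Λ) (h : l ≤ κ) (h' : κ ≤ κ'), U κ' (h.trans h') ≫ bond h' = U κ h) :
    ∃ r : ∀ ν : Λ, A ⟶ XX ν, IsCompatible bond r ∧
      ∀ (ν κ : Λ) (hl : l ≤ κ) (hν : ν ≤ κ), U κ hl ≫ bond hν = r ν := by
  choose σ hνσ hlσ using fun ν : Λ => directed_of (· ≤ ·) ν l
  have restrict : ∀ (ν κ : Λ) (hl : l ≤ κ) (hν : ν ≤ κ),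
      U κ hl ≫ bond hν = U (σ ν) (hlσ ν) ≫ bond (hνσ ν) := by
    intro ν κ hl hν
    obtain ⟨τ, hκτ, hστ⟩ := directed_of (· ≤ ·) κ (σ ν)
    rw [← hU κ τ hl hκτ, ← hU (σ ν) τ (hlσ ν) hστ, Category.assoc, Category.assoc,
      bond_comp, bond_comp]
  refine ⟨fun ν => U (σ ν) (hlσ ν) ≫ bond (hνσ ν), fun ν ν' h => ?_, restrict⟩
  rw [Category.assoc, bond_comp, restrict]

theorem exists_isCompatible_of_uniformlyMovable [IsDirected Λ (· ≤ ·)] (P : T → Prop) (X : T)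
    (hXP : ∀ l : Λ, P (XX l))
    (bond_comp : ∀ {l l' l'' : Λ} (h : l ≤ l') (h' : l' ≤ l''),
      bond h' ≫ bond h = bond (h.trans h'))
    (pp : ∀ l : Λ, X ⟶ XX l) (pp_comp : ∀ {l l' : Λ} (h : l ≤ l'), pp l' ≫ bond h = pp l)
    (l : Λ) (hY : UniformlyMovable (commaObj P X (hXP l) (pp l))) :
    ∃ (Q : T) (_ : P Q) (a : X ⟶ Q) (V : ∀ ν : Λ, Q ⟶ XX ν),
      IsCompatible bond V ∧ a ≫ V l = pp l := by
  obtain ⟨M, -, u, -, hu⟩ := hY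
  let q (κ : Λ) (h : l ≤ κ) : commaObj P X (hXP κ) (pp κ) ⟶ commaObj P X (hXP l) (pp l) :=
    commaHom (bond h) (pp_comp h)
  let U (κ : Λ) (h : l ≤ κ) : M.right.obj ⟶ XX κ := (u _ (q κ h)).right.hom
  have hU : ∀ (κ κ' : Λ) (h : l ≤ κ) (h' : κ ≤ κ'),
      U κ' (h.trans h') ≫ bond h' = U κ h := by
    intro κ κ' h h'
    have hq : commaHom (bond h') (pp_comp h') ≫ q κ h = q κ' (h.trans h') :=
      StructuredArrow.hom_ext _ _ (InducedCategory.hom_ext (bond_comp h h'))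
    exact (congrArg (fun φ => φ.right.hom) (hu _ _ _ _ _ hq)).symm
  obtain ⟨V, hV, hUV⟩ := exists_isCompatible_of_compatible_above bond bond_comp l U hU
  have hMU : M.hom ≫ U l le_rfl = pp l := StructuredArrow.w (u _ (q l le_rfl))
  refine ⟨M.right.obj, M.right.property, M.hom, V, hV, ?_⟩
  rw [← hUV l l le_rfl le_rfl, ← Category.assoc, hMU, pp_comp]

theorem exists_comp_eq_bond_of_comp_eq_pp [IsDirected Λ (· ≤ ·)] (P : T → Prop) (X : T)
    (bond_comp : ∀ {l l' l'' : Λ} (h : l ≤ l') (h' : l' ≤ l''),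
      bond h' ≫ bond h = bond (h.trans h'))
    (pp : ∀ l : Λ, X ⟶ XX l) (pp_comp : ∀ {l l' : Λ} (h : l ≤ l'), pp l' ≫ bond h = pp l)
    (AE1 : ∀ (Q : T), P Q → ∀ f : X ⟶ Q, ∃ (l : Λ) (fl : XX l ⟶ Q), pp l ≫ fl = f)
    (AE2 : ∀ (l : Λ) (Q : T), P Q → ∀ f g : XX l ⟶ Q, pp l ≫ f = pp l ≫ g →
      ∃ (l' : Λ) (h : l ≤ l'), bond h ≫ f = bond h ≫ g)
    {Q : T} (hQ : P Q) (a : X ⟶ Q) {l : Λ} (hl : P (XX l)) (w : Q ⟶ XX l)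
    (haw : a ≫ w = pp l) :
    ∃ (ml : Λ) (h : l ≤ ml) (g : XX ml ⟶ Q), g ≫ w = bond h := by
  obtain ⟨μ, fμ, hfμ⟩ := AE1 Q hQ a
  obtain ⟨μ', hμ, hlμ⟩ := directed_of (· ≤ ·) μ l
  have hpp : pp μ' ≫ (bond hμ ≫ fμ ≫ w) = pp μ' ≫ bond hlμ := by
    rw [pp_comp, ← Category.assoc, pp_comp, ← Category.assoc, hfμ, haw]
  obtain ⟨ml, hμ', hbond⟩ := AE2 μ' _ hl _ _ hpp
  refine ⟨ml, hlμ.trans hμ', bond (hμ.trans hμ') ≫ fμ, ?_⟩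
  rw [← bond_comp hμ hμ', ← bond_comp hlμ hμ']
  simpa only [Category.assoc] using hbond

end InverseSystem

open InverseSystem

theorem system_uniformlyMovable_of_comma_uniformlyMovable_general
    {T : Type*} [Category T] (P : T → Prop) (X : T)
    {Λ : Type*} [Preorder Λ] [IsDirected Λ (· ≤ ·)]
    (XX : Λ → T) (hXP : ∀ l : Λ, P (XX l))
    (bond : ∀ {l l' : Λ}, l ≤ l' → (XX l' ⟶ XX l))
    (bond_comp : ∀ {l l' l'' : Λ} (h : l ≤ l') (h' : l' ≤ l''),
      bond h' ≫ bond h = bond (h.trans h'))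
    (pp : ∀ l : Λ, X ⟶ XX l)
    (pp_comp : ∀ {l l' : Λ} (h : l ≤ l'), pp l' ≫ bond h = pp l)
    (AE1 : ∀ (Q : T), P Q → ∀ f : X ⟶ Q, ∃ (l : Λ) (fl : XX l ⟶ Q), pp l ≫ fl = f)
    (AE2 : ∀ (l : Λ) (Q : T), P Q → ∀ f g : XX l ⟶ Q, pp l ≫ f = pp l ≫ g →
      ∃ (l' : Λ) (h : l ≤ l'), bond h ≫ f = bond h ≫ g)
    (hcomma : ∀ Y : StructuredArrow X (ObjectProperty.ι P), UniformlyMovable Y) :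
    ∀ l : Λ, ∃ (ml : Λ) (h : l ≤ ml) (r : ∀ ν : Λ, XX ml ⟶ XX ν),
      (∀ (ν ν' : Λ) (h' : ν ≤ ν'), r ν' ≫ bond h' = r ν) ∧ r l = bond h := by
  intro l
  obtain ⟨Q, hQ, a, V, hV, haV⟩ := exists_isCompatible_of_uniformlyMovable bond P X hXP
    bond_comp pp pp_comp l (hcomma _)
  obtain ⟨ml, h, g, hg⟩ := exists_comp_eq_bond_of_comp_eq_pp bond P X bond_comp pp pp_comp
    AE1 AE2 hQ a (hXP l) (V l) haV
  exact ⟨ml, h, fun ν => g ≫ V ν, fun ν ν' h' => by rw [Category.assoc, hV], hg⟩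

/-- If the comma category `X_𝒫` of `X` over a full subcategory `𝒫` is a uniformly movable
category, then any inverse system forming a `𝒫`-expansion of `X` is uniformly movable. -/
theorem system_uniformlyMovable_of_comma_uniformlyMovable
    {T : Type*} [Category T] (P : T → Prop) (X : T)
    {Λ : Type*} [Preorder Λ] [IsDirected Λ (· ≤ ·)]
    (XX : Λ → T) (hXP : ∀ l : Λ, P (XX l))
    (bond : ∀ {l l' : Λ}, l ≤ l' → (XX l' ⟶ XX l))
    (bond_refl : ∀ l : Λ, bond (le_refl l) = 𝟙 (XX l))
    (bond_comp : ∀ {l l' l'' : Λ} (h : l ≤ l') (h' : l' ≤ l''),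
      bond h' ≫ bond h = bond (h.trans h'))
    (pp : ∀ l : Λ, X ⟶ XX l)
    (pp_comp : ∀ {l l' : Λ} (h : l ≤ l'), pp l' ≫ bond h = pp l)
    (AE1 : ∀ (Q : T), P Q → ∀ f : X ⟶ Q, ∃ (l : Λ) (fl : XX l ⟶ Q), pp l ≫ fl = f)
    (AE2 : ∀ (l : Λ) (Q : T), P Q → ∀ f g : XX l ⟶ Q, pp l ≫ f = pp l ≫ g →
      ∃ (l' : Λ) (h : l ≤ l'), bond h ≫ f = bond h ≫ g)
    (hcomma : ∀ Y : StructuredArrow X (ObjectProperty.ι P), UniformlyMovable Y) :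
    ∀ l : Λ, ∃ (ml : Λ) (h : l ≤ ml) (r : ∀ ν : Λ, XX ml ⟶ XX ν),
      (∀ (ν ν' : Λ) (h' : ν ≤ ν'), r ν' ≫ bond h' = r ν) ∧ r l = bond h :=
  system_uniformlyMovable_of_comma_uniformlyMovable_general P X XX hXP bond bond_comp pp pp_comp AE1
    AE2 hcomma
end

section
/- Let 𝒯 be a category, 𝒫 a full subcategory of 𝒯, X an object of 𝒯, and suppose given 𝒫-expansion data for X indexed by the natural numbers (an inverse sequence): an inverse system (X_n, p_{n n'}, ℕ) with all X_n in 𝒫 and morphisms p_n : X → X_n with p_{n n'} ∘ p_{n'} = p_n for n ≤ n', satisfying conditions (AE1) and (AE2). Then the comma category X_𝒫 of X over 𝒫 is uniformly movable if and only if it is movable. -/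
/-!
Movability of the objects `p_n : X → X_n` of `X_𝒫`, read through (AE1) and (AE2), gives indices
`s n ≥ n` such that `p_{n, s n}` factors through every `X_m` (`m ≥ n`) under `X`. Since the index
set is `ℕ`, these factorizations can be composed recursively into a thread
`c_k : X_{s 0} → X_k` with `c_k ∘ p_{s 0} = p_k`. An object `f = f_j ∘ p_j` of `X_𝒫` then
receives the morphism `f_j ∘ c_j` from `p_{s 0}`, independently of the factorization by (AE2);
these morphisms form a cone over the identity functor of `X_𝒫`, and such a cone makes every
object uniformly movable.
-/

open CategoryTheory

theorem UniformlyMovable.movable {K : Type*} [Category K] {X : K} (h : UniformlyMovable X) :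
    Movable X := by
  obtain ⟨M, m, u, hu, -⟩ := h
  exact ⟨M, m, fun Y p => ⟨u Y p, hu Y p⟩⟩

theorem uniformlyMovable_of_cone_id {K : Type*} [Category K] (c : Limits.Cone (𝟭 K)) (X : K) :
    UniformlyMovable X :=
  ⟨c.pt, c.π.app X, fun Y _ => c.π.app Y, fun _ p => c.w p,
    fun _ _ _ _ r _ => (c.w r).symm⟩

universe v u

structure SequentialExpansion {T : Type u} [Category.{v} T] (P : T → Prop) (X : T) where
  obj : ℕ → T
  obj_mem : ∀ n, P (obj n)
  bond : ∀ {n n' : ℕ}, n ≤ n' → (obj n' ⟶ obj n)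
  bond_comp : ∀ {n n' n'' : ℕ} (h : n ≤ n') (h' : n' ≤ n''),
    bond h' ≫ bond h = bond (h.trans h')
  proj : ∀ n, X ⟶ obj n
  proj_bond : ∀ {n n' : ℕ} (h : n ≤ n'), proj n' ≫ bond h = proj n
  -- (AE1)
  exists_factor : ∀ {Q : T}, P Q → ∀ f : X ⟶ Q, ∃ (n : ℕ) (g : obj n ⟶ Q), proj n ≫ g = f
  -- (AE2)
  exists_bond_eq : ∀ (n : ℕ) {Q : T}, P Q → ∀ f g : obj n ⟶ Q, proj n ≫ f = proj n ≫ g →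
    ∃ (n' : ℕ) (h : n ≤ n'), bond h ≫ f = bond h ≫ g

namespace SequentialExpansion

variable {T : Type u} [Category.{v} T] {P : T → Prop} {X : T} (E : SequentialExpansion P X)

theorem bond_comp_assoc {n n' n'' : ℕ} (h : n ≤ n') (h' : n' ≤ n'') {Y : T} (f : E.obj n ⟶ Y) :
    E.bond h' ≫ E.bond h ≫ f = E.bond (h.trans h') ≫ f := by
  rw [← Category.assoc, E.bond_comp]

theorem proj_bond_assoc {n n' : ℕ} (h : n ≤ n') {Y : T} (f : E.obj n ⟶ Y) :
    E.proj n' ≫ E.bond h ≫ f = E.proj n ≫ f := by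
  rw [← Category.assoc, E.proj_bond]

theorem exists_bond_eq_of_proj_eq {Q : T} (hQ : P Q) {j k : ℕ} {t : E.obj j ⟶ Q}
    {t' : E.obj k ⟶ Q} (h : E.proj j ≫ t = E.proj k ≫ t') :
    ∃ (l : ℕ) (hj : j ≤ l) (hk : k ≤ l), E.bond hj ≫ t = E.bond hk ≫ t' := by
  obtain ⟨l, hl, heq⟩ := E.exists_bond_eq (max j k) hQ (E.bond (le_max_left j k) ≫ t)
    (E.bond (le_max_right j k) ≫ t') (by rw [E.proj_bond_assoc, E.proj_bond_assoc, h])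
  rw [E.bond_comp_assoc, E.bond_comp_assoc] at heq
  exact ⟨l, _, _, heq⟩

def term (n : ℕ) : StructuredArrow X (ObjectProperty.ι P) :=
  StructuredArrow.mk (Y := ObjectProperty.FullSubcategory.mk (E.obj n) (E.obj_mem n)) (E.proj n)

def IsMovable : Prop :=
  ∀ n, ∃ (n' : ℕ) (hn : n ≤ n'), ∀ (m : ℕ) (hm : n ≤ m),
    ∃ u : E.obj n' ⟶ E.obj m, E.proj n' ≫ u = E.proj m ∧ u ≫ E.bond hm = E.bond hn

theorem isMovable_of_movable (h : ∀ n, Movable (E.term n)) : E.IsMovable := by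
  intro n
  obtain ⟨M, m, hm⟩ := h n
  let μ : M.right.obj ⟶ E.obj n := m.right.hom
  obtain ⟨N, e, he⟩ := E.exists_factor M.right.property M.hom
  have heμ : E.proj N ≫ e ≫ μ = E.proj n ≫ 𝟙 _ := by
    rw [← Category.assoc, he, Category.comp_id]
    exact StructuredArrow.w m
  obtain ⟨n', hN, hn, hbond⟩ := E.exists_bond_eq_of_proj_eq (E.obj_mem n) heμ
  refine ⟨n', hn, fun k hk => ?_⟩
  obtain ⟨v, hv⟩ := hm (E.term k)
    (StructuredArrow.homMk (InducedCategory.homMk (E.bond hk)) (E.proj_bond hk))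
  let w : M.right.obj ⟶ E.obj k := v.right.hom
  have hw : M.hom ≫ w = E.proj k := StructuredArrow.w v
  have hwμ : w ≫ E.bond hk = μ := congrArg (fun f => f.right.hom) hv
  refine ⟨E.bond hN ≫ e ≫ w, ?_, ?_⟩
  · rw [E.proj_bond_assoc, ← Category.assoc, he, hw]
  · rw [Category.assoc, Category.assoc, hwμ, hbond, Category.comp_id]

theorem IsMovable.exists_thread {E : SequentialExpansion P X} (hE : E.IsMovable) :
    ∃ (n₀ : ℕ) (c : ∀ k, E.obj n₀ ⟶ E.obj k),
      (∀ k, E.proj n₀ ≫ c k = E.proj k) ∧ ∀ {k k' : ℕ} (h : k ≤ k'), c k' ≫ E.bond h = c k := by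
  choose s hs lift lift_proj lift_bond using hE
  let u (k : ℕ) : E.obj (s k) ⟶ E.obj (s (k + 1)) :=
    lift k (s (k + 1)) (k.le_succ.trans (hs (k + 1)))
  let g (k : ℕ) : E.obj (s 0) ⟶ E.obj (s k) := Functor.OfSequence.map u 0 k k.zero_le
  have g_succ (k : ℕ) : g (k + 1) = g k ≫ u k := by
    rw [← Functor.OfSequence.map_le_succ u k]
    exact Functor.OfSequence.map_comp u 0 k (k + 1) k.zero_le k.le_succ
  have g_proj (k : ℕ) : E.proj (s 0) ≫ g k = E.proj (s k) := by
    induction k with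
    | zero => exact Category.comp_id _
    | succ k ih => rw [g_succ, ← Category.assoc, ih, lift_proj]
  have g_bond {k k' : ℕ} (hk : k ≤ k') :
      g k' ≫ E.bond (hk.trans (hs k')) = g k ≫ E.bond (hs k) := by
    induction k', hk using Nat.le_induction with
    | base => rfl
    | succ k' hk ih =>
      rw [g_succ, ← E.bond_comp hk (k'.le_succ.trans (hs (k' + 1))), Category.assoc,
        ← Category.assoc (u k'), lift_bond, E.bond_comp, ih]
  refine ⟨s 0, fun k => g k ≫ E.bond (hs k), fun k => ?_, fun {k k'} hk => ?_⟩
  · rw [← Category.assoc, g_proj, E.proj_bond]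
  · rw [Category.assoc, E.bond_comp, g_bond hk]

theorem comp_eq_of_proj_comp_eq {A : T} {c : ∀ k, A ⟶ E.obj k}
    (hc : ∀ {k k' : ℕ} (h : k ≤ k'), c k' ≫ E.bond h = c k) {Q : T} (hQ : P Q) {j k : ℕ}
    {t : E.obj j ⟶ Q} {t' : E.obj k ⟶ Q} (h : E.proj j ≫ t = E.proj k ≫ t') :
    c j ≫ t = c k ≫ t' := by
  obtain ⟨l, hj, hk, heq⟩ := E.exists_bond_eq_of_proj_eq hQ h
  rw [← hc hj, ← hc hk, Category.assoc, Category.assoc, heq]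

theorem nonempty_cone_id_of_thread (A : StructuredArrow X (ObjectProperty.ι P))
    {c : ∀ k, A.right.obj ⟶ E.obj k} (hA : ∀ k, A.hom ≫ c k = E.proj k)
    (hc : ∀ {k k' : ℕ} (h : k ≤ k'), c k' ≫ E.bond h = c k) :
    Nonempty (Limits.Cone (𝟭 (StructuredArrow X (ObjectProperty.ι P)))) := by
  choose j t ht using fun Z : StructuredArrow X (ObjectProperty.ι P) =>
    E.exists_factor Z.right.property Z.hom
  let leg (Z : StructuredArrow X (ObjectProperty.ι P)) : A ⟶ Z :=
    StructuredArrow.homMk (InducedCategory.homMk (c (j Z) ≫ t Z))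
      (by rw [← ht Z, ← hA (j Z), Category.assoc]; rfl)
  refine ⟨⟨A, { app := leg, naturality := fun W Z r => ?_ }⟩⟩
  have hr : E.proj (j W) ≫ t W ≫ r.right.hom = E.proj (j Z) ≫ t Z := by
    rw [← Category.assoc, ht, ht]
    exact StructuredArrow.w r
  ext
  simpa [leg] using (E.comp_eq_of_proj_comp_eq hc Z.right.property hr).symm

end SequentialExpansion

theorem comma_uniformlyMovable_iff_movable_of_sequence_general
    {T : Type*} [Category T] (P : T → Prop) (X : T)
    (XX : ℕ → T) (hXP : ∀ n : ℕ, P (XX n))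
    (bond : ∀ {n n' : ℕ}, n ≤ n' → (XX n' ⟶ XX n))
    (bond_comp : ∀ {n n' n'' : ℕ} (h : n ≤ n') (h' : n' ≤ n''),
      bond h' ≫ bond h = bond (h.trans h'))
    (pp : ∀ n : ℕ, X ⟶ XX n)
    (pp_comp : ∀ {n n' : ℕ} (h : n ≤ n'), pp n' ≫ bond h = pp n)
    (AE1 : ∀ (Q : T), P Q → ∀ f : X ⟶ Q, ∃ (n : ℕ) (fn : XX n ⟶ Q), pp n ≫ fn = f)
    (AE2 : ∀ (n : ℕ) (Q : T), P Q → ∀ f g : XX n ⟶ Q, pp n ≫ f = pp n ≫ g →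
      ∃ (n' : ℕ) (h : n ≤ n'), bond h ≫ f = bond h ≫ g) :
    (∀ Y : StructuredArrow X (ObjectProperty.ι P), UniformlyMovable Y) ↔
    (∀ Y : StructuredArrow X (ObjectProperty.ι P), Movable Y) := by
  refine ⟨fun h Y => (h Y).movable, fun h => ?_⟩
  let E : SequentialExpansion P X :=
    ⟨XX, hXP, bond, bond_comp, pp, pp_comp, AE1 _, fun n _ => AE2 n _⟩
  obtain ⟨n₀, c, hc_proj, hc_bond⟩ := (E.isMovable_of_movable fun n => h (E.term n)).exists_thread
  obtain ⟨cone⟩ := E.nonempty_cone_id_of_thread (E.term n₀) hc_proj hc_bond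
  exact uniformlyMovable_of_cone_id cone

/-- If `X` admits a `𝒫`-expansion indexed by an inverse sequence (over `ℕ`), then the comma
category `X_𝒫` is uniformly movable if and only if it is movable. -/
theorem comma_uniformlyMovable_iff_movable_of_sequence
    {T : Type*} [Category T] (P : T → Prop) (X : T)
    (XX : ℕ → T) (hXP : ∀ n : ℕ, P (XX n))
    (bond : ∀ {n n' : ℕ}, n ≤ n' → (XX n' ⟶ XX n))
    (bond_refl : ∀ n : ℕ, bond (le_refl n) = 𝟙 (XX n))
    (bond_comp : ∀ {n n' n'' : ℕ} (h : n ≤ n') (h' : n' ≤ n''),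
      bond h' ≫ bond h = bond (h.trans h'))
    (pp : ∀ n : ℕ, X ⟶ XX n)
    (pp_comp : ∀ {n n' : ℕ} (h : n ≤ n'), pp n' ≫ bond h = pp n)
    (AE1 : ∀ (Q : T), P Q → ∀ f : X ⟶ Q, ∃ (n : ℕ) (fn : XX n ⟶ Q), pp n ≫ fn = f)
    (AE2 : ∀ (n : ℕ) (Q : T), P Q → ∀ f g : XX n ⟶ Q, pp n ≫ f = pp n ≫ g →
      ∃ (n' : ℕ) (h : n ≤ n'), bond h ≫ f = bond h ≫ g) :
    (∀ Y : StructuredArrow X (ObjectProperty.ι P), UniformlyMovable Y) ↔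
    (∀ Y : StructuredArrow X (ObjectProperty.ι P), Movable Y) :=
  comma_uniformlyMovable_iff_movable_of_sequence_general P X XX hXP bond bond_comp pp pp_comp AE1
    AE2
end
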